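/- arXiv:1910.14371 — 3 statements merged into one kernel-verified Lean document; each statement's English description precedes it below -/
import Mathlib

section
/- Let c > 0, let ψ ∈ W^{2,∞}(𝕋), and let u be a classical solution of the temperature problem for (c,ψ). Then the function x ↦ min{ u(x,y) : y ∈ 𝕋, x ≤ ψ(y) } is nondecreasing on the interval (−∞, max_𝕋 ψ]. (Monotonicity of the minimal temperature in the direction of propagation.) -/
/-!
Perturb `u` by the barrier `ε e^{αx}` with `0 < α < c`. Since
`(c ∂ₓ - Δ)(ε e^{αx}) = εα(c - α) e^{αx} > 0`, the perturbed function has no interior local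
minimum (there `∂ₓ` vanishes and `Δ ≥ 0`), and no local minimum on the free boundary either: by
the Neumann condition its derivative in the inward direction `(-1, ψ')` is
`-c - εα e^{αx} < 0`. By periodicity in `y` and compactness it does attain its minimum over
`{x ≥ x₁}`, which must therefore lie on the line `x = x₁`. Letting `ε → 0`, the minimum of `u`
on that line bounds `u` on the whole region `{x ≥ x₁}`.
-/

open MeasureTheory Set Filter
open scoped NNReal

noncomputable section

/-- The open fresh region `Ω_ψ = {(x,y) : x < ψ(y)}`.  Functions on the torus `𝕋 = ℝ/ℤ`
are identified with 1-periodic functions on `ℝ`, so `Ω_ψ ⊆ ℝ × ℝ`. -/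
def Omega (ψ : ℝ → ℝ) : Set (ℝ × ℝ) := {p | p.1 < ψ p.2}

/-- The closure of `Ω_ψ`, i.e. `{(x,y) : x ≤ ψ(y)}`. -/
def OmegaCl (ψ : ℝ → ℝ) : Set (ℝ × ℝ) := {p | p.1 ≤ ψ p.2}

/-- Partial derivative in the `x`-direction. -/
def pdx (u : ℝ × ℝ → ℝ) (p : ℝ × ℝ) : ℝ := fderiv ℝ u p (1, 0)

/-- Partial derivative in the `y`-direction. -/
def pdy (u : ℝ × ℝ → ℝ) (p : ℝ × ℝ) : ℝ := fderiv ℝ u p (0, 1)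

/-- Laplacian. -/
def lap (u : ℝ × ℝ → ℝ) (p : ℝ × ℝ) : ℝ := pdx (pdx u) p + pdy (pdy u) p

/-- `ψ ∈ W^{2,∞}(𝕋)`: a 1-periodic `C¹` function with Lipschitz derivative;
its a.e. second derivative is `deriv (deriv ψ)`. -/
structure W2infPer (ψ : ℝ → ℝ) : Prop where
  periodic : Function.Periodic ψ 1
  contDiff : ContDiff ℝ 1 ψ
  lipDeriv : ∃ L : ℝ≥0, LipschitzWith L (deriv ψ)

/-- A classical solution `u` of the temperature problem for `(c, ψ)`:
1-periodic in `y`, continuous on the closure of `Ω_ψ`, `C²` inside, `C¹` up to the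
boundary, with finite energy `∫_{Ω_ψ} (u² + |∇u|²) < ∞` (one period in `y`),
satisfying `c uₓ - Δu = 0` in `Ω_ψ`, the Neumann condition
`∂u/∂ν = c/√(1+ψ'²)` on `{x = ψ(y)}` (where `ν = (1, -ψ')/√(1+ψ'²)`),
and `u → 0` uniformly in `y` as `x → -∞`. -/
structure IsTempSol (c : ℝ) (ψ : ℝ → ℝ) (u : ℝ × ℝ → ℝ) : Prop where
  periodic : ∀ x y : ℝ, u (x, y + 1) = u (x, y)
  contOn : ContinuousOn u (OmegaCl ψ)
  c2 : ContDiffOn ℝ 2 u (Omega ψ)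
  c1 : ContDiffOn ℝ 1 u (OmegaCl ψ)
  pde : ∀ p ∈ Omega ψ, c * pdx u p - lap u p = 0
  bc : ∀ y : ℝ,
    fderivWithin ℝ u (OmegaCl ψ) (ψ y, y) (1, -deriv ψ y) / Real.sqrt (1 + deriv ψ y ^ 2)
      = c / Real.sqrt (1 + deriv ψ y ^ 2)
  energy : IntegrableOn (fun p => u p ^ 2 + ‖fderiv ℝ u p‖ ^ 2)
      (Omega ψ ∩ {p : ℝ × ℝ | p.2 ∈ Ico (0 : ℝ) 1})
  decay : ∀ ε > 0, ∃ X : ℝ, ∀ p ∈ OmegaCl ψ, p.1 ≤ X → |u p| ≤ ε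

open Topology

lemma Function.Periodic.apply_fract {α : Type*} {f : ℝ → α} (hf : Function.Periodic f 1)
    (y : ℝ) :
    f (Int.fract y) = f y := by
  simpa only [mul_one, Int.self_sub_floor] using hf.sub_int_mul_eq (x := y) ⌊y⌋

lemma isOpen_Omega {ψ : ℝ → ℝ} (hψ : Continuous ψ) : IsOpen (Omega ψ) :=
  isOpen_lt continuous_fst (hψ.comp continuous_snd)

lemma isClosed_OmegaCl {ψ : ℝ → ℝ} (hψ : Continuous ψ) : IsClosed (OmegaCl ψ) :=
  isClosed_le continuous_fst (hψ.comp continuous_snd)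

section SecondDerivative

variable {E : Type*} [NormedAddCommGroup E] [NormedSpace ℝ E]

theorem IsLocalMin.deriv_deriv_nonneg {f : ℝ → ℝ} {a : ℝ} (h : IsLocalMin f a)
    (hf : ContinuousAt f a) : 0 ≤ deriv (deriv f) a := by
  by_contra! hneg
  have hmax := isLocalMax_of_deriv_deriv_neg hneg h.deriv_eq_zero hf
  have hconst : f =ᶠ[𝓝 a] fun _ => f a := by
    filter_upwards [h, hmax] with x hmin hmax using le_antisymm hmax hmin
  have hderiv : deriv f =ᶠ[𝓝 a] fun _ => 0 :=
    hconst.eventuallyEq_nhds.mono fun x hx => by rw [hx.deriv_eq, deriv_const]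
  rw [hderiv.deriv_eq, deriv_const] at hneg
  exact hneg.false

theorem ContDiffAt.differentiableAt_fderiv_apply {f : E → ℝ} {p : E} (hf : ContDiffAt ℝ 2 f p)
    (v : E) : DifferentiableAt ℝ (fun q => fderiv ℝ f q v) p :=
  ((hf.fderiv_right (m := 1) (by norm_num)).differentiableAt one_ne_zero).clm_apply
    (differentiableAt_const v)

theorem IsLocalMin.fderiv_fderiv_apply_nonneg {f : E → ℝ} {p : E} (h : IsLocalMin f p)
    (hf : ContDiffAt ℝ 2 f p) (v : E) : 0 ≤ fderiv ℝ (fun q => fderiv ℝ f q v) p v := by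
  set line : ℝ → E := fun t => p + t • v
  have hline : ∀ t, HasDerivAt line v t := fun t => by
    simpa only [one_smul] using ((hasDerivAt_id' t).smul_const v).const_add p
  have hline0 : line 0 = p := by simp [line]
  have hmin : IsLocalMin (f ∘ line) 0 :=
    (hline0 ▸ h).comp_continuous (hline 0).continuousAt
  have hdiff : ∀ᶠ t in 𝓝 0, DifferentiableAt ℝ f (line t) :=
    (hline 0).continuousAt.tendsto.eventually (hline0 ▸ (hf.eventually (by simp)).mono
      fun q hq => hq.differentiableAt two_ne_zero)
  have hderiv : deriv (f ∘ line) =ᶠ[𝓝 0] (fun q => fderiv ℝ f q v) ∘ line := by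
    filter_upwards [hdiff] with t ht
    exact (ht.hasFDerivAt.comp_hasDerivAt t (hline t)).deriv
  have hsecond := (hf.differentiableAt_fderiv_apply v).hasFDerivAt.comp_hasDerivAt_of_eq 0
    (hline 0) hline0.symm
  have := hmin.deriv_deriv_nonneg ((hf.continuousAt).comp_of_eq (hline 0).continuousAt hline0)
  rwa [hderiv.deriv_eq, hsecond.deriv] at this

end SecondDerivative

section PartialDerivatives

variable {u v : ℝ × ℝ → ℝ} {p : ℝ × ℝ}

theorem IsLocalMin.lap_nonneg (h : IsLocalMin u p) (hu : ContDiffAt ℝ 2 u p) : 0 ≤ lap u p :=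
  add_nonneg (h.fderiv_fderiv_apply_nonneg hu _) (h.fderiv_fderiv_apply_nonneg hu _)

theorem Filter.EventuallyEq.pdx_eq (h : u =ᶠ[𝓝 p] v) : pdx u p = pdx v p := by
  unfold pdx; rw [h.fderiv_eq]

theorem Filter.EventuallyEq.pdy_eq (h : u =ᶠ[𝓝 p] v) : pdy u p = pdy v p := by
  unfold pdy; rw [h.fderiv_eq]

theorem pdx_add (hu : DifferentiableAt ℝ u p) (hv : DifferentiableAt ℝ v p) :
    pdx (u + v) p = pdx u p + pdx v p := by
  simp [pdx, fderiv_add hu hv]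

theorem pdy_add (hu : DifferentiableAt ℝ u p) (hv : DifferentiableAt ℝ v p) :
    pdy (u + v) p = pdy u p + pdy v p := by
  simp [pdy, fderiv_add hu hv]

theorem lap_add (hu : ContDiffAt ℝ 2 u p) (hv : ContDiffAt ℝ 2 v p) :
    lap (u + v) p = lap u p + lap v p := by
  have hpdx : pdx (u + v) =ᶠ[𝓝 p] pdx u + pdx v := by
    filter_upwards [hu.eventually (by simp), hv.eventually (by simp)] with q hqu hqv
    exact pdx_add (hqu.differentiableAt two_ne_zero) (hqv.differentiableAt two_ne_zero)
  have hpdy : pdy (u + v) =ᶠ[𝓝 p] pdy u + pdy v := by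
    filter_upwards [hu.eventually (by simp), hv.eventually (by simp)] with q hqu hqv
    exact pdy_add (hqu.differentiableAt two_ne_zero) (hqv.differentiableAt two_ne_zero)
  rw [lap, hpdx.pdx_eq, hpdy.pdy_eq,
    pdx_add (u := pdx u) (v := pdx v) (hu.differentiableAt_fderiv_apply _)
      (hv.differentiableAt_fderiv_apply _),
    pdy_add (u := pdy u) (v := pdy v) (hu.differentiableAt_fderiv_apply _)
      (hv.differentiableAt_fderiv_apply _), lap, lap]
  ring

end PartialDerivatives

def expBarrier (ε α : ℝ) (q : ℝ × ℝ) : ℝ := ε * Real.exp (α * q.1)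

section ExpBarrier

variable (ε α : ℝ)

theorem contDiff_expBarrier : ContDiff ℝ 2 (expBarrier ε α) := by
  unfold expBarrier; fun_prop

theorem hasFDerivAt_expBarrier (q : ℝ × ℝ) :
    HasFDerivAt (expBarrier ε α)
      (expBarrier (ε * α) α q • ContinuousLinearMap.fst ℝ ℝ ℝ) q := by
  have h := (((hasDerivAt_id' q.1).const_mul α).exp.const_mul ε).hasFDerivAt.comp q
    hasFDerivAt_fst
  refine HasFDerivAt.congr_fderiv (f := expBarrier ε α) h ?_
  ext <;> simp [expBarrier, mul_comm, mul_assoc]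

theorem pdx_expBarrier : pdx (expBarrier ε α) = expBarrier (ε * α) α := by
  ext q; simp [pdx, (hasFDerivAt_expBarrier ε α q).fderiv]

theorem pdy_expBarrier : pdy (expBarrier ε α) = 0 := by
  ext q; simp [pdy, (hasFDerivAt_expBarrier ε α q).fderiv]

theorem lap_expBarrier : lap (expBarrier ε α) = expBarrier (ε * α * α) α := by
  ext q; simp [lap, pdx_expBarrier, pdy_expBarrier, pdy]

end ExpBarrier

theorem mem_posTangentConeAt_setOf_nonneg {E : Type*} [NormedAddCommGroup E] [NormedSpace ℝ E]
    {φ : E → ℝ} {φ' : E →L[ℝ] ℝ} {a w : E} (hφ : HasFDerivAt φ φ' a) (ha : 0 ≤ φ a)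
    (hw : 0 < φ' w) : w ∈ posTangentConeAt {x | 0 ≤ φ x} a := by
  have hline : HasDerivAt (fun t : ℝ => a + t • w) w 0 := by
    simpa only [one_smul] using ((hasDerivAt_id' (0 : ℝ)).smul_const w).const_add a
  have hslope := (hφ.comp_hasDerivAt_of_eq 0 hline (by simp)).tendsto_slope_zero_right
  refine mem_posTangentConeAt_of_frequently_mem (Eventually.frequently ?_)
  filter_upwards [hslope.eventually (eventually_gt_nhds hw), self_mem_nhdsWithin]
    with t ht (htpos : 0 < t)
  have hincr := (mul_pos_iff_of_pos_left (inv_pos.2 htpos)).1 ht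
  simp only [Function.comp_apply, zero_add, zero_smul, add_zero] at hincr
  show 0 ≤ φ (a + t • w)
  linarith

theorem mem_posTangentConeAt_OmegaCl {ψ : ℝ → ℝ} {y : ℝ} (hψ : DifferentiableAt ℝ ψ y) :
    ((-1 : ℝ), deriv ψ y) ∈ posTangentConeAt (OmegaCl ψ) (ψ y, y) := by
  have hφ : HasFDerivAt (fun q : ℝ × ℝ => ψ q.2 - q.1)
      ((ContinuousLinearMap.toSpanSingleton ℝ (deriv ψ y)).comp (ContinuousLinearMap.snd ℝ ℝ ℝ)
        - ContinuousLinearMap.fst ℝ ℝ ℝ) (ψ y, y) :=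
    (hψ.hasDerivAt.hasFDerivAt.comp (ψ y, y) hasFDerivAt_snd).sub hasFDerivAt_fst
  have hset : OmegaCl ψ = {q | 0 ≤ ψ q.2 - q.1} := by ext q; simp [OmegaCl]
  rw [hset]
  exact mem_posTangentConeAt_setOf_nonneg hφ (by simp)
    (by simp; nlinarith [mul_self_nonneg (deriv ψ y)])

theorem exists_isMinOn_OmegaCl_inter {ψ : ℝ → ℝ} (hψp : Function.Periodic ψ 1) (hψ : Continuous ψ)
    {f : ℝ × ℝ → ℝ} (hfp : ∀ x y, f (x, y + 1) = f (x, y)) (hf : ContinuousOn f (OmegaCl ψ))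
    {x₁ : ℝ} (hne : (OmegaCl ψ ∩ {q | x₁ ≤ q.1}).Nonempty) :
    ∃ p ∈ OmegaCl ψ ∩ {q | x₁ ≤ q.1}, IsMinOn f (OmegaCl ψ ∩ {q | x₁ ≤ q.1}) p := by
  set K := OmegaCl ψ ∩ {q | x₁ ≤ q.1}
  have hψ_le : ∀ y, ψ y ≤ sSup (range ψ) :=
    fun y => le_csSup (hψp.compact_of_continuous one_ne_zero hψ).bddAbove (mem_range_self y)
  have hfract : ∀ q ∈ K, (q.1, Int.fract q.2) ∈ K ∩ {q | q.2 ∈ Icc 0 1} := fun q hq =>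
    ⟨⟨by simpa [OmegaCl, hψp.apply_fract] using hq.1, hq.2⟩,
      Int.fract_nonneg _, (Int.fract_lt_one _).le⟩
  have hf_fract : ∀ q : ℝ × ℝ, f (q.1, Int.fract q.2) = f q := fun q =>
    (Function.Periodic.apply_fract (f := fun y => f (q.1, y)) (hfp q.1) q.2)
  have hcompact : IsCompact (K ∩ {q | q.2 ∈ Icc 0 1}) := by
    refine ((isCompact_Icc (a := x₁) (b := sSup (range ψ))).prod
      (isCompact_Icc (a := (0 : ℝ)) (b := 1))).of_isClosed_subset
      (((isClosed_OmegaCl hψ).inter (isClosed_le continuous_const continuous_fst)).inter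
        (isClosed_Icc.preimage continuous_snd)) ?_
    exact fun q hq => ⟨⟨hq.1.2, hq.1.1.trans (hψ_le q.2)⟩, hq.2⟩
  obtain ⟨q, hq⟩ := hne
  obtain ⟨p, hp, hpmin⟩ := hcompact.exists_isMinOn ⟨_, hfract q hq⟩ (hf.mono fun q hq => hq.1.1)
  refine ⟨p, hp.1, fun r hr => ?_⟩
  show f p ≤ f r
  rw [← hf_fract r]
  exact hpmin (hfract r hr)

namespace IsTempSol

variable {c : ℝ} {ψ : ℝ → ℝ} {u : ℝ × ℝ → ℝ} {ε α : ℝ}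

theorem not_isLocalMin_add_expBarrier (hψ : Continuous ψ) (hu : IsTempSol c ψ u)
    (hε : 0 < ε) (hα : 0 < α) (hαc : α < c) {p : ℝ × ℝ} (hp : p ∈ Omega ψ) :
    ¬ IsLocalMin (u + expBarrier ε α) p := by
  intro hmin
  have hu₂ : ContDiffAt ℝ 2 u p := hu.c2.contDiffAt ((isOpen_Omega hψ).mem_nhds hp)
  have hb₂ : ContDiffAt ℝ 2 (expBarrier ε α) p := (contDiff_expBarrier ε α).contDiffAt
  have hpdx : pdx (u + expBarrier ε α) p = 0 := by simp [pdx, hmin.fderiv_eq_zero]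
  have hlap : 0 ≤ lap (u + expBarrier ε α) p := hmin.lap_nonneg (hu₂.add hb₂)
  rw [pdx_add (hu₂.differentiableAt two_ne_zero) (hb₂.differentiableAt two_ne_zero),
    pdx_expBarrier] at hpdx
  rw [lap_add hu₂ hb₂, lap_expBarrier] at hlap
  have hpde := hu.pde p hp
  simp only [expBarrier] at hpdx hlap
  nlinarith [mul_pos (mul_pos (mul_pos hε hα) (Real.exp_pos (α * p.1))) (sub_pos.2 hαc)]

theorem not_isLocalMinOn_add_expBarrier_boundary {y : ℝ} (hψ : DifferentiableAt ℝ ψ y)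
    (hu : IsTempSol c ψ u) (hc : 0 ≤ c) (hε : 0 < ε) (hα : 0 < α) :
    ¬ IsLocalMinOn (u + expBarrier ε α) (OmegaCl ψ) (ψ y, y) := by
  intro hmin
  have hmem : (ψ y, y) ∈ OmegaCl ψ := le_refl (ψ y)
  have hD := ((hu.c1.differentiableOn one_ne_zero) _ hmem).hasFDerivWithinAt
  have hDc : fderivWithin ℝ u (OmegaCl ψ) (ψ y, y) (1, -deriv ψ y) = c :=
    (div_left_inj' (Real.sqrt_pos.2 (by positivity)).ne').1 (hu.bc y)
  have hDc' : fderivWithin ℝ u (OmegaCl ψ) (ψ y, y) (-1, deriv ψ y) = -c := by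
    rw [← hDc, ← map_neg]; simp
  have := hmin.hasFDerivWithinAt_nonneg (hD.add (hasFDerivAt_expBarrier ε α _).hasFDerivWithinAt)
    (mem_posTangentConeAt_OmegaCl hψ)
  simp [hDc', expBarrier] at this
  linarith [mul_pos (mul_pos hε hα) (Real.exp_pos (α * ψ y))]

theorem not_isLocalMinOn_add_expBarrier (hψ : Differentiable ℝ ψ) (hu : IsTempSol c ψ u)
    (hε : 0 < ε) (hα : 0 < α) (hαc : α < c) {p : ℝ × ℝ} (hp : p ∈ OmegaCl ψ) :
    ¬ IsLocalMinOn (u + expBarrier ε α) (OmegaCl ψ) p := by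
  intro hmin
  rcases (show p.1 ≤ ψ p.2 from hp).lt_or_eq with hint | hbdry
  · exact hu.not_isLocalMin_add_expBarrier hψ.continuous hε hα hαc hint
      (hmin.isLocalMin (mem_of_superset ((isOpen_Omega hψ.continuous).mem_nhds hint)
        fun q hq => show q.1 ≤ ψ q.2 from le_of_lt hq))
  · rw [← Prod.mk.eta (p := p), hbdry] at hmin
    exact hu.not_isLocalMinOn_add_expBarrier_boundary (hψ _) (hα.trans hαc).le hε hα hmin

theorem fst_eq_of_isMinOn_add_expBarrier (hψ : Differentiable ℝ ψ) (hu : IsTempSol c ψ u)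
    (hε : 0 < ε) (hα : 0 < α) (hαc : α < c) {x₁ : ℝ} {p : ℝ × ℝ}
    (hp : p ∈ OmegaCl ψ ∩ {q | x₁ ≤ q.1})
    (hmin : IsMinOn (u + expBarrier ε α) (OmegaCl ψ ∩ {q | x₁ ≤ q.1}) p) : p.1 = x₁ := by
  refine hp.2.eq_or_lt.elim Eq.symm fun hlt => (hu.not_isLocalMinOn_add_expBarrier hψ hε hα hαc
    hp.1 (hmin.filter_mono (le_principal_iff.2 ?_))).elim
  exact inter_mem_nhdsWithin _ (continuous_fst.continuousAt.preimage_mem_nhds (Ici_mem_nhds hlt))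

theorem sInf_le_of_le_fst (hψp : Function.Periodic ψ 1) (hψ : Differentiable ℝ ψ) (hc : 0 < c)
    (hu : IsTempSol c ψ u) {x₁ : ℝ} {q : ℝ × ℝ} (hq : q ∈ OmegaCl ψ) (hxq : x₁ ≤ q.1) :
    sInf (u '' {p : ℝ × ℝ | p ∈ OmegaCl ψ ∧ p.1 = x₁}) ≤ u q := by
  have hK : q ∈ OmegaCl ψ ∩ {q | x₁ ≤ q.1} := ⟨hq, hxq⟩
  obtain ⟨p₀, -, hp₀⟩ :=
    exists_isMinOn_OmegaCl_inter hψp hψ.continuous hu.periodic hu.contOn ⟨q, hK⟩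
  have hbdd : BddBelow (u '' {p : ℝ × ℝ | p ∈ OmegaCl ψ ∧ p.1 = x₁}) :=
    ⟨u p₀, by rintro _ ⟨r, ⟨hr, hrx⟩, rfl⟩; exact hp₀ ⟨hr, hrx.ge⟩⟩
  refine le_of_forall_pos_le_add fun δ hδ => ?_
  set ε := δ * Real.exp (-(c / 2) * q.1)
  have hε : 0 < ε := by positivity
  obtain ⟨p, hp, hpmin⟩ := exists_isMinOn_OmegaCl_inter hψp hψ.continuous
    (f := u + expBarrier ε (c / 2)) (fun x y => by simp [expBarrier, hu.periodic])
    (hu.contOn.add (contDiff_expBarrier ε _).continuous.continuousOn) ⟨q, hK⟩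
  have hpx := hu.fst_eq_of_isMinOn_add_expBarrier hψ hε (half_pos hc) (half_lt_self hc) hp hpmin
  calc sInf (u '' {p : ℝ × ℝ | p ∈ OmegaCl ψ ∧ p.1 = x₁})
      ≤ u p := csInf_le hbdd ⟨p, ⟨hp.1, hpx⟩, rfl⟩
    _ ≤ u p + expBarrier ε (c / 2) p := le_add_of_nonneg_right (by unfold expBarrier; positivity)
    _ ≤ u q + expBarrier ε (c / 2) q := hpmin hK
    _ = u q + δ := by simp [expBarrier, ε, mul_assoc, ← Real.exp_add]

end IsTempSol

/-- **Monotonicity of the minimal temperature in the direction of propagation.**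
If `c > 0`, `ψ ∈ W^{2,∞}(𝕋)` and `u` is a classical solution of the temperature problem
for `(c,ψ)`, then `x ↦ min { u(x,y) : y ∈ 𝕋, x ≤ ψ(y) }` is nondecreasing on
`(-∞, max_𝕋 ψ]`. -/
theorem min_temperature_monotone
    (c : ℝ) (ψ : ℝ → ℝ) (u : ℝ × ℝ → ℝ)
    (hc : 0 < c) (hψ : W2infPer ψ) (hu : IsTempSol c ψ u) :
    ∀ x₁ x₂ : ℝ, x₁ ≤ x₂ → x₂ ≤ sSup (Set.range ψ) →
      sInf (u '' {p : ℝ × ℝ | p ∈ OmegaCl ψ ∧ p.1 = x₁})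
        ≤ sInf (u '' {p : ℝ × ℝ | p ∈ OmegaCl ψ ∧ p.1 = x₂}) := by
  intro x₁ x₂ h12 hx₂
  have hψd : Differentiable ℝ ψ := hψ.contDiff.differentiable one_ne_zero
  obtain ⟨y₀, hy₀⟩ : sSup (range ψ) ∈ range ψ :=
    (hψ.periodic.compact_of_continuous one_ne_zero hψd.continuous).sSup_mem (range_nonempty ψ)
  refine le_csInf ⟨u (x₂, y₀), (x₂, y₀), ⟨hx₂.trans_eq hy₀.symm, rfl⟩, rfl⟩ ?_
  rintro _ ⟨q, ⟨hq, rfl⟩, rfl⟩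
  exact hu.sInf_le_of_le_fst hψ.periodic hψd hc hq h12
end
end

section
/- Let G : ℝ → ℝ be continuous and let R > 0. Then there exists r > 0 such that for every function h : 𝕋 → ℝ which is Lipschitz with |h'(y)| ≤ G(h(y)) for almost every y ∈ 𝕋, and every y₀ ∈ 𝕋 with |h(y₀)| ≤ R, one has |h(y)| ≤ 2R for all y in the ball B(y₀, r) of 𝕋. -/
open MeasureTheory Set Filter
open scoped NNReal Interval

/-!
Let `M` bound `G` on `[-2R, 2R]` and take `r = R / M`. As long as `|h|` stays below `2R`, the
inequality `|h'| ≤ G ∘ h` gives `|h'| ≤ M`, so over a distance `< r` the function `h` moves by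
less than `R`. Hence `h` cannot reach the level `2R` within `r` of a point where `|h| ≤ R`: at the
point of that level closest to `y₀`, the increment from `y₀` would already be too large.
-/

theorem AbsolutelyContinuousOnInterval.abs_sub_le_of_ae_abs_deriv_le {f : ℝ → ℝ} {a b C : ℝ}
    (hf : AbsolutelyContinuousOnInterval f a b) (hC : ∀ᵐ x, x ∈ Ι a b → |deriv f x| ≤ C) :
    |f b - f a| ≤ C * |b - a| := by
  rw [← hf.integral_deriv_eq_sub]
  exact intervalIntegral.norm_integral_le_of_norm_le_const_ae (f := deriv f) hC

theorem LipschitzWith.abs_lt_of_ae_abs_deriv_le_on_sublevel {h : ℝ → ℝ} {L : ℝ≥0}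
    (hh : LipschitzWith L h) {S M : ℝ} (hM : 0 ≤ M)
    (hder : ∀ᵐ x, |h x| ≤ S → |deriv h x| ≤ M) {a b : ℝ} (hab : |h a| + M * |b - a| < S) :
    |h b| < S := by
  by_contra! hb
  have hE : IsCompact {x ∈ uIcc a b | S ≤ |h x|} :=
    isCompact_uIcc.inter_right (isClosed_le continuous_const hh.continuous.abs)
  obtain ⟨τ, ⟨hτ, hSτ⟩, hmin⟩ :=
    hE.exists_isMinOn ⟨b, right_mem_uIcc, hb⟩ (continuous_sub_right a).abs.continuousOn
  have hbelow : ∀ x ∈ Ι a τ, x ≠ τ → |h x| ≤ S := by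
    intro x hx hxτ
    have hxa : |x - a| < |τ - a| := by
      rcases mem_uIoc.1 hx with ⟨h₁, h₂⟩ | ⟨h₁, h₂⟩
      · have hxτ' := lt_of_le_of_ne h₂ hxτ
        rw [abs_of_pos (by linarith), abs_of_pos (by linarith)]
        linarith
      · rw [abs_of_nonpos (by linarith), abs_of_neg (by linarith)]
        linarith
    by_contra! hxS
    exact hxa.not_ge <| hmin ⟨uIcc_subset_uIcc_left hτ (uIoc_subset_uIcc hx), hxS.le⟩
  have hincr : |h τ - h a| ≤ M * |τ - a| :=
    (hh.lipschitzOnWith.absolutelyContinuousOnInterval).abs_sub_le_of_ae_abs_deriv_le <| by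
      filter_upwards [hder, volume.ae_ne τ] with x hx hxτ hxI using hx (hbelow x hxI hxτ)
  have hτa : M * |τ - a| ≤ M * |b - a| :=
    mul_le_mul_of_nonneg_left (abs_sub_left_of_mem_uIcc hτ) hM
  linarith [abs_sub_abs_le_abs_sub (h τ) (h a)]

/-- Let `G : ℝ → ℝ` be continuous and `R > 0`. Then there is `r > 0` such that for every
Lipschitz function `h` on the torus `𝕋 = ℝ/ℤ` (identified with a 1-periodic Lipschitz
function on `ℝ`) with `|h'(y)| ≤ G(h(y))` a.e., and every `y₀` with `|h(y₀)| ≤ R`, one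
has `|h(y)| ≤ 2R` on the ball `B(y₀, r)` of `𝕋`. -/
theorem bounded_propagation_of_ode_bound
    (G : ℝ → ℝ) (hG : Continuous G) (R : ℝ) (hR : 0 < R) :
    ∃ r > 0, ∀ (h : ℝ → ℝ) (L : ℝ≥0), Function.Periodic h 1 → LipschitzWith L h →
      (∀ᵐ y : ℝ, |deriv h y| ≤ G (h y)) →
      ∀ y₀ : ℝ, |h y₀| ≤ R → ∀ y : ℝ, |y - y₀| < r → |h y| ≤ 2 * R := by
  obtain ⟨M₀, hM₀⟩ := (isCompact_Icc (a := -(2 * R)) (b := 2 * R)).bddAbove_image hG.continuousOn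
  set M := max M₀ 1
  have hM : 0 < M := lt_max_of_lt_right one_pos
  have hGM : ∀ x, |x| ≤ 2 * R → G x ≤ M := fun x hx =>
    (hM₀ (mem_image_of_mem G (abs_le.1 hx))).trans (le_max_left _ _)
  refine ⟨R / M, by positivity, fun h L _ hh hder y₀ hy₀ y hy => ?_⟩
  have hstep : M * |y - y₀| < R := by rwa [lt_div_iff₀' hM] at hy
  refine (hh.abs_lt_of_ae_abs_deriv_le_on_sublevel hM.le ?_ (by linarith)).le
  filter_upwards [hder] with x hx hxR using hx.trans (hGM _ hxR)
end

section
/- For each n ∈ ℕ let ψₙ : 𝕋 → ℝ be continuous with ψₙ ≥ 0, and set Ωₙ := {(x,y) ∈ ℝ × 𝕋 : x < ψₙ(y)} and Ω_∞ := ⋃ₙ int(⋂_{k ≥ n} Ω_k). Suppose ȳ ∈ 𝕋 is such that the point (0,ȳ) lies on the topological boundary of Ω_∞ in ℝ × 𝕋. Then there exist a strictly increasing sequence of natural numbers (n_p)_p and points w_p ∈ 𝕋 such that w_p → ȳ and ψ_{n_p}(w_p) → 0 as p → ∞. -/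
open Filter Set Topology

/-! Since `⋃ₙ int(⋂_{k ≥ n} Ω_k)` is open, `(0, ȳ)` lies outside it, so no ball `B` around
`(0, ȳ)` fits inside any `⋂_{k ≥ n} Ω_k`: some `q ∈ B` has `ψ_k(q.2) ≤ q.1` for a `k ≥ n`,
and then `0 ≤ ψ_k(q.2) ≤ q.1` is as small as the radius of `B`, while `q.2` is close to `ȳ`.
Doing this for radii `1/(p+1)` and indices `n` beyond the previous ones yields the sequence. -/

theorem exists_strictMono_tendsto_of_frequently_dist_lt {X Y : Type*} [PseudoMetricSpace X]
    [PseudoMetricSpace Y] {F : ℕ → X → Y} {x : X} {y : Y}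
    (h : ∀ ε > 0, ∃ᶠ k in atTop, ∃ w, dist w x < ε ∧ dist (F k w) y < ε) :
    ∃ (φ : ℕ → ℕ) (w : ℕ → X), StrictMono φ ∧ Tendsto w atTop (𝓝 x) ∧
      Tendsto (fun p => F (φ p) (w p)) atTop (𝓝 y) := by
  have hrad : Tendsto (fun p : ℕ => 1 / ((p : ℝ) + 1)) atTop (𝓝 0) :=
    tendsto_one_div_add_atTop_nhds_zero_nat
  obtain ⟨φ, hφ, hφP⟩ :=
    extraction_forall_of_frequently fun p : ℕ => h _ (Nat.one_div_pos_of_nat (n := p))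
  choose w hwx hFy using hφP
  refine ⟨φ, w, hφ, ?_, ?_⟩
  · exact tendsto_iff_dist_tendsto_zero.2 <|
      squeeze_zero (fun _ => dist_nonneg) (fun p => (hwx p).le) hrad
  · exact tendsto_iff_dist_tendsto_zero.2 <|
      squeeze_zero (fun _ => dist_nonneg) (fun p => (hFy p).le) hrad

theorem frequently_exists_dist_lt_of_notMem_iUnion_interior {X : Type*} [PseudoMetricSpace X]
    {ψ : ℕ → X → ℝ} (hpos : ∀ n y, 0 ≤ ψ n y) {y : X}
    (hy : ((0 : ℝ), y) ∉ ⋃ n : ℕ, interior (⋂ (k : ℕ) (_ : n ≤ k),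
      {p : ℝ × X | p.1 < ψ k p.2}))
    {ε : ℝ} (hε : 0 < ε) :
    ∃ᶠ k in atTop, ∃ w, dist w y < ε ∧ dist (ψ k w) 0 < ε := by
  refine frequently_atTop.2 fun n => ?_
  have hball :
      ¬ Metric.ball ((0 : ℝ), y) ε ⊆ ⋂ (k : ℕ) (_ : n ≤ k), {p : ℝ × X | p.1 < ψ k p.2} :=
    fun hsub => hy <| mem_iUnion.2
      ⟨n, mem_interior_iff_mem_nhds.2 (mem_of_superset (Metric.ball_mem_nhds _ hε) hsub)⟩
  obtain ⟨q, hq, hqΩ⟩ := not_subset.1 hball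
  simp only [mem_iInter, mem_ofPred_eq, not_forall, not_lt] at hqΩ
  obtain ⟨k, hnk, hψq⟩ := hqΩ
  rw [Metric.mem_ball, Prod.dist_eq, max_lt_iff, Real.dist_eq, sub_zero] at hq
  refine ⟨k, hnk, q.2, hq.2, ?_⟩
  rw [Real.dist_eq, sub_zero, abs_of_nonneg (hpos k q.2)]
  exact hψq.trans_lt ((le_abs_self q.1).trans_lt hq.1)

theorem frontier_point_of_limit_domain_general
    (ψ : ℕ → AddCircle (1 : ℝ) → ℝ)
    (hpos : ∀ n y, 0 ≤ ψ n y)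
    (ybar : AddCircle (1 : ℝ))
    (hfrontier : ((0 : ℝ), ybar) ∈ frontier
      (⋃ n : ℕ, interior (⋂ (k : ℕ) (_ : n ≤ k),
        {p : ℝ × AddCircle (1 : ℝ) | p.1 < ψ k p.2}))) :
    ∃ (np : ℕ → ℕ) (w : ℕ → AddCircle (1 : ℝ)), StrictMono np ∧
      Tendsto w atTop (nhds ybar) ∧
      Tendsto (fun p => ψ (np p) (w p)) atTop (nhds 0) := by
  rw [(isOpen_iUnion fun _ => isOpen_interior).frontier_eq] at hfrontier
  exact exists_strictMono_tendsto_of_frequently_dist_lt fun _ hε =>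
    frequently_exists_dist_lt_of_notMem_iUnion_interior hpos hfrontier.2 hε

/-- For continuous `ψₙ ≥ 0` on the torus `𝕋 = ℝ/ℤ`, set `Ωₙ = {(x,y) : x < ψₙ(y)}`
and `Ω_∞ = ⋃ₙ int(⋂_{k ≥ n} Ω_k)`. If `(0, ȳ)` lies on the topological boundary of
`Ω_∞` in `ℝ × 𝕋`, then there are a strictly increasing sequence `(n_p)` and points
`w_p ∈ 𝕋` with `w_p → ȳ` and `ψ_{n_p}(w_p) → 0`. -/
theorem frontier_point_of_limit_domain
    (ψ : ℕ → AddCircle (1 : ℝ) → ℝ)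
    (hcont : ∀ n, Continuous (ψ n)) (hpos : ∀ n y, 0 ≤ ψ n y)
    (ybar : AddCircle (1 : ℝ))
    (hfrontier : ((0 : ℝ), ybar) ∈ frontier
      (⋃ n : ℕ, interior (⋂ (k : ℕ) (_ : n ≤ k),
        {p : ℝ × AddCircle (1 : ℝ) | p.1 < ψ k p.2}))) :
    ∃ (np : ℕ → ℕ) (w : ℕ → AddCircle (1 : ℝ)), StrictMono np ∧
      Tendsto w atTop (nhds ybar) ∧
      Tendsto (fun p => ψ (np p) (w p)) atTop (nhds 0) :=
  frontier_point_of_limit_domain_general ψ hpos ybar hfrontier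
end
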